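/- Let T be a poset with the property that every element is either maximal or has only finitely many elements above it. Suppose S is a family of objects indexed by T in an abelian category such that each X(κ) has a finite filtration whose subquotients are D(μ) with μ ≥ κ, with D(κ) appearing exactly once. Then for each κ, D(κ) lies in the smallest triangulated subcategory of the bounded derived category closed under direct summands containing all X(λ). -/
import Mathlib


open CategoryTheory Category Limits Pretriangulated Classical

/-- A class of objects of a (pre)triangulated category is *thick* if it is closed
under isomorphisms, shifts, extensions (distinguished triangles) and retracts
(direct summands), and contains the zero objects. -/
structure IsThickClass {C : Type*} [Category C] [Preadditive C] [HasZeroObject C]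
    [HasShift C ℤ] [∀ n : ℤ, (CategoryTheory.shiftFunctor C n).Additive]
    [Pretriangulated C] (P : C → Prop) : Prop where
  zero : ∀ (X : C), IsZero X → P X
  iso : ∀ {X Y : C}, (X ≅ Y) → P X → P Y
  shift : ∀ (X : C) (n : ℤ), P X → P (X⟦n⟧)
  ext₂ : ∀ (T : Triangle C), (T ∈ distTriang C) → P T.obj₁ → P T.obj₃ → P T.obj₂
  retract : ∀ (X Y : C), (∃ (s : Y ⟶ X) (r : X ⟶ Y), s ≫ r = 𝟙 Y) → P X → P Y

/-- `X` belongs to the thick (triangulated, closed under direct summands)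
subcategory generated by the class `S`. -/
def InThickClosure {C : Type*} [Category C] [Preadditive C] [HasZeroObject C]
    [HasShift C ℤ] [∀ n : ℤ, (CategoryTheory.shiftFunctor C n).Additive]
    [Pretriangulated C] (S : Set C) (X : C) : Prop :=
  ∀ P : C → Prop, IsThickClass P → (∀ s ∈ S, P s) → P X

section Aux

variable {C : Type*} [Category C] [Preadditive C] [HasZeroObject C]
    [HasShift C ℤ] [∀ n : ℤ, (CategoryTheory.shiftFunctor C n).Additive]
    [Pretriangulated C] {P : C → Prop}

lemma IsThickClass.ext₃' (hP : IsThickClass P) (T : Triangle C) (hT : T ∈ distTriang C)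
    (h₁ : P T.obj₁) (h₂ : P T.obj₂) : P T.obj₃ :=
  hP.ext₂ T.rotate (rot_of_distTriang T hT) h₂ (hP.shift _ 1 h₁)

lemma IsThickClass.ext₁' (hP : IsThickClass P) (T : Triangle C) (hT : T ∈ distTriang C)
    (h₂ : P T.obj₂) (h₃ : P T.obj₃) : P T.obj₁ :=
  hP.ext₂ T.invRotate (inv_rot_of_distTriang T hT) (hP.shift _ (-1) h₃) h₂

end Aux

open scoped Classical in
/-- Let `T` be a finite poset and, in an abelian category `A`, families of objects
`X κ` and `D κ` indexed by `T`, such that each `X κ` has a finite filtration whose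
subquotients are objects `D μ` with `μ ≥ κ`, with `D κ` appearing exactly once.
Then each `D κ` lies in the smallest triangulated subcategory of the (bounded)
derived category of `A` closed under direct summands and containing all the
`X λ`. -/
theorem stmt_6 (A : Type) [Category A] [Abelian A] [HasDerivedCategory A]
    (T : Type) [PartialOrder T] [Finite T]
    (X D : T → A)
    (hfilt : ∀ κ : T, ∃ (m : ℕ) (F : Fin (m + 1) → A)
      (f : ∀ i : Fin m, F i.castSucc ⟶ F i.succ) (μ : Fin m → T),
        IsZero (F 0) ∧ Nonempty (F (Fin.last m) ≅ X κ) ∧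
        (∀ i, Mono (f i)) ∧
        (∀ i, Nonempty (Limits.cokernel (f i) ≅ D (μ i))) ∧
        (∀ i, κ ≤ μ i) ∧
        (Finset.univ.filter (fun i => μ i = κ)).card = 1) :
    ∀ κ : T, InThickClosure
      (Set.range (fun t : T => (DerivedCategory.singleFunctor A 0).obj (X t)))
      ((DerivedCategory.singleFunctor A 0).obj (D κ)) := by
  intro κ
  induction κ using WellFoundedGT.induction with
  | _ κ IH =>
  intro P hP hS
  obtain ⟨m, F, f, μ, hzero, ⟨eX⟩, hmono, hcoker, hle, hcard⟩ := hfilt κ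
  obtain ⟨i₀, hi₀⟩ := Finset.card_eq_one.mp hcard
  have hμ : ∀ i : Fin m, μ i = κ ↔ i = i₀ := by
    intro i
    constructor
    · intro h
      have : i ∈ Finset.univ.filter (fun i => μ i = κ) := by simp [h]
      rw [hi₀] at this
      simpa using this
    · intro h
      have : i₀ ∈ Finset.univ.filter (fun i => μ i = κ) := by
        rw [hi₀]; simp
      subst h
      simpa using this
  -- the short exact sequences
  let S : ∀ i : Fin m, CategoryTheory.ShortComplex A := fun i =>
    CategoryTheory.ShortComplex.mk (f i) (Limits.cokernel.π (f i)) (Limits.cokernel.condition _)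
  have hSE : ∀ i : Fin m, (S i).ShortExact := by
    intro i
    have := hmono i
    exact {
      exact := CategoryTheory.ShortComplex.exact_of_g_is_cokernel _
        (Limits.cokernelIsCokernel (f i))
      mono_f := hmono i
      epi_g := by dsimp [S]; infer_instance }
  have hdist : ∀ i : Fin m,
      (hSE i).singleTriangle ∈ distTriang (DerivedCategory A) :=
    fun i => (hSE i).singleTriangle_distinguished
  -- the subquotients other than the one at i₀ are in P, by induction hypothesis
  have hD : ∀ i : Fin m, i ≠ i₀ → P ((DerivedCategory.singleFunctor A 0).obj
      (Limits.cokernel (f i))) := by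
    intro i hi
    have hlt : κ < μ i := lt_of_le_of_ne (hle i) (by
      intro h
      exact hi ((hμ i).mp h.symm))
    have hDμ := IH (μ i) hlt P hP hS
    obtain ⟨e⟩ := hcoker i
    exact hP.iso ((DerivedCategory.singleFunctor A 0).mapIso e).symm hDμ
  -- notation
  have hQ : ∀ (n : ℕ) (h : n < m + 1), n ≤ (i₀ : ℕ) →
      P ((DerivedCategory.singleFunctor A 0).obj (F ⟨n, h⟩)) := by
    intro n
    induction n with
    | zero =>
      intro h _
      exact hP.zero _ ((DerivedCategory.singleFunctor A 0).map_isZero hzero)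
    | succ n ih =>
      intro h hn
      have hi₀m : (i₀ : ℕ) < m := i₀.isLt
      have hnm : n < m := by omega
      set i : Fin m := ⟨n, hnm⟩ with hidef
      have hii₀ : i ≠ i₀ := by
        intro hcontr
        have : (i : ℕ) = (i₀ : ℕ) := congrArg Fin.val hcontr
        simp only [hidef] at this
        omega
      have h₁ : P ((DerivedCategory.singleFunctor A 0).obj (F i.castSucc)) := by
        have : i.castSucc = (⟨n, Nat.lt_succ_of_lt hnm⟩ : Fin (m + 1)) := rfl
        rw [this]
        exact ih (Nat.lt_succ_of_lt hnm) (Nat.le_of_succ_le hn)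
      have h₃ := hD i hii₀
      have := hP.ext₂ (hSE i).singleTriangle (hdist i) h₁ h₃
      have hsucc : i.succ = (⟨n + 1, h⟩ : Fin (m + 1)) := rfl
      rw [CategoryTheory.ShortComplex.ShortExact.singleTriangle_obj₂] at this
      dsimp [S] at this
      rwa [hsucc] at this
  -- downward from the top
  have hQ' : ∀ (n : ℕ), n ≤ m - ((i₀ : ℕ) + 1) →
      P ((DerivedCategory.singleFunctor A 0).obj (F ⟨m - n, by omega⟩)) := by
    intro n
    induction n with
    | zero =>
      intro _
      have : (⟨m - 0, by omega⟩ : Fin (m + 1)) = Fin.last m := by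
        apply Fin.ext; simp
      rw [this]
      refine hP.iso ((DerivedCategory.singleFunctor A 0).mapIso eX).symm ?_
      exact hS _ ⟨κ, rfl⟩
    | succ n ih =>
      intro hn
      have hi₀m : (i₀ : ℕ) < m := i₀.isLt
      have hlt : m - (n + 1) < m := by omega
      set i : Fin m := ⟨m - (n + 1), hlt⟩ with hidef
      have hii₀ : i ≠ i₀ := by
        intro hcontr
        have : (i : ℕ) = (i₀ : ℕ) := congrArg Fin.val hcontr
        simp only [hidef] at this
        omega
      have h₂ : P ((DerivedCategory.singleFunctor A 0).obj (F i.succ)) := by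
        have : i.succ = (⟨m - n, by omega⟩ : Fin (m + 1)) := by
          apply Fin.ext
          simp [hidef]
          omega
        rw [this]
        exact ih (by omega)
      have h₃ := hD i hii₀
      have := hP.ext₁' (hSE i).singleTriangle (hdist i) h₂ h₃
      rw [CategoryTheory.ShortComplex.ShortExact.singleTriangle_obj₁] at this
      dsimp [S] at this
      have hcast : i.castSucc = (⟨m - (n + 1), by omega⟩ : Fin (m + 1)) := rfl
      rwa [hcast] at this
  -- finish: the triangle at i₀
  have h₁ : P ((DerivedCategory.singleFunctor A 0).obj (F i₀.castSucc)) := by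
    have : i₀.castSucc = (⟨(i₀ : ℕ), by omega⟩ : Fin (m + 1)) := rfl
    rw [this]
    exact hQ _ _ le_rfl
  have h₂ : P ((DerivedCategory.singleFunctor A 0).obj (F i₀.succ)) := by
    have hi₀m : (i₀ : ℕ) < m := i₀.isLt
    have : i₀.succ = (⟨m - (m - ((i₀ : ℕ) + 1)), by omega⟩ : Fin (m + 1)) := by
      apply Fin.ext; simp; omega
    rw [this]
    exact hQ' _ le_rfl
  have hfin := hP.ext₃' (hSE i₀).singleTriangle (hdist i₀) h₁ h₂
  rw [CategoryTheory.ShortComplex.ShortExact.singleTriangle_obj₃] at hfin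
  dsimp [S] at hfin
  obtain ⟨e⟩ := hcoker i₀
  have hμi₀ : μ i₀ = κ := (hμ i₀).mpr rfl
  rw [hμi₀] at e
  exact hP.iso ((DerivedCategory.singleFunctor A 0).mapIso e) hfin
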